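/- With A = [0,∞), B = (−∞,−1], dist(A,B) = 1 in (ℝ, |·|), and with α(x) = ⌊log₂ x⌋ mod 2 for x>0, α(0)=0 (convention 2^{⌊log₂ 0⌋}=0): for all x ∈ A and y ∈ B, with Tx = 2x·α(x) + (1/4)(x − 2^{⌊log₂x⌋})(1 − α(x)), Sy = (y+1)/8 + (15/8)(y+1)·α(−y−1) − 1, f_A(x) = 4x·α(x), f_B(y) = −4(y+1)·α(−y−1), the contraction inequality |Tx − Sy| + f_A(Tx) + f_B(Sy) ≤ (5/8)(|x − y| + f_A(x) + f_B(y)) + (3/8)·1 holds. -/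
import Mathlib


/-- α(x) = ⌊log₂ x⌋ mod 2 for x > 0 and α(0) = 0. -/
noncomputable def alphaFn (x : ℝ) : ℝ :=
  if 0 < x then ((⌊Real.logb 2 x⌋ % 2 : ℤ) : ℝ) else 0

/-- Tx = 2x·α(x) + (1/4)(x − 2^⌊log₂ x⌋)(1 − α(x)) for x > 0, T0 = 0. -/
noncomputable def Tmap (x : ℝ) : ℝ :=
  if 0 < x then
    2 * x * alphaFn x + (1 / 4) * (x - (2 : ℝ) ^ (⌊Real.logb 2 x⌋ : ℤ)) * (1 - alphaFn x)
  else 0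

/-- Sy = (y+1)/8 + (15/8)(y+1)·α(−y−1) − 1. -/
noncomputable def Smap (y : ℝ) : ℝ :=
  (y + 1) / 8 + (15 / 8) * (y + 1) * alphaFn (-y - 1) - 1

/-- f_A(x) = 4x·α(x). -/
noncomputable def fA (x : ℝ) : ℝ := 4 * x * alphaFn x

/-- f_B(y) = −4(y+1)·α(−y−1). -/
noncomputable def fB (y : ℝ) : ℝ := -4 * (y + 1) * alphaFn (-y - 1)

lemma alpha_cases (x : ℝ) : alphaFn x = 0 ∨ alphaFn x = 1 := by
  unfold alphaFn
  split
  · rcases Int.emod_two_eq (⌊Real.logb 2 x⌋) with h | h <;> simp [h]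
  · left; rfl

lemma pow_floor_bounds (x : ℝ) (hx : 0 < x) :
    ((2:ℝ) ^ (⌊Real.logb 2 x⌋ : ℤ)) ≤ x ∧ x ≤ 2 * (2:ℝ) ^ (⌊Real.logb 2 x⌋ : ℤ) := by
  have hx' : (2:ℝ) ^ (Real.logb 2 x) = x := Real.rpow_logb two_pos (by norm_num) hx
  have h1 : (2:ℝ) ^ (⌊Real.logb 2 x⌋ : ℤ) = (2:ℝ) ^ ((⌊Real.logb 2 x⌋ : ℝ)) := by
    rw [Real.rpow_intCast]
  constructor
  · calc (2:ℝ) ^ (⌊Real.logb 2 x⌋ : ℤ) = (2:ℝ) ^ ((⌊Real.logb 2 x⌋ : ℝ)) := h1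
      _ ≤ (2:ℝ) ^ (Real.logb 2 x) :=
        Real.rpow_le_rpow_of_exponent_le one_le_two (Int.floor_le _)
      _ = x := hx'
  · calc x = (2:ℝ) ^ (Real.logb 2 x) := hx'.symm
      _ ≤ (2:ℝ) ^ ((⌊Real.logb 2 x⌋ : ℝ) + 1) :=
        Real.rpow_le_rpow_of_exponent_le one_le_two (le_of_lt (Int.lt_floor_add_one _))
      _ = 2 * (2:ℝ) ^ (⌊Real.logb 2 x⌋ : ℤ) := by
        rw [Real.rpow_add two_pos, Real.rpow_one, mul_comm, h1]

lemma alpha_two_mul (x : ℝ) (hx : 0 < x) : alphaFn (2 * x) = 1 - alphaFn x := by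
  have h2x : 0 < 2 * x := by linarith
  have hlog : Real.logb 2 (2 * x) = Real.logb 2 x + 1 := by
    have hself : Real.logb 2 2 = 1 := Real.logb_self_eq_one one_lt_two
    rw [Real.logb_mul (by norm_num) (ne_of_gt hx), hself]
    ring
  have hfloor : ⌊Real.logb 2 (2 * x)⌋ = ⌊Real.logb 2 x⌋ + 1 := by
    rw [hlog, Int.floor_add_one]
  unfold alphaFn
  rw [if_pos h2x, if_pos hx, hfloor]
  rcases Int.emod_two_eq ⌊Real.logb 2 x⌋ with h | h
  · have : (⌊Real.logb 2 x⌋ + 1) % 2 = 1 := by omega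
    rw [this, h]; norm_num
  · have : (⌊Real.logb 2 x⌋ + 1) % 2 = 0 := by omega
    rw [this, h]; norm_num

lemma T_bound (x : ℝ) (hx : 0 ≤ x) :
    0 ≤ Tmap x ∧ Tmap x + fA (Tmap x) ≤ (5/8) * (x + fA x) := by
  rcases eq_or_lt_of_le hx with h0 | h0
  · subst h0
    have hT : Tmap 0 = 0 := by simp [Tmap]
    have hA : alphaFn 0 = 0 := by simp [alphaFn]
    simp [hT, fA, hA]
  · rcases alpha_cases x with ha | ha
    · have hp := pow_floor_bounds x h0
      have hT : Tmap x = (1/4) * (x - (2:ℝ) ^ (⌊Real.logb 2 x⌋ : ℤ)) := by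
        simp [Tmap, h0, ha]
      have hT0 : 0 ≤ Tmap x := by rw [hT]; nlinarith [hp.1]
      have hT8 : Tmap x ≤ x / 8 := by rw [hT]; nlinarith [hp.2]
      refine ⟨hT0, ?_⟩
      have hfaT : fA (Tmap x) ≤ 4 * Tmap x := by
        unfold fA
        rcases alpha_cases (Tmap x) with h | h <;> rw [h] <;> nlinarith
      have hfAx : fA x = 0 := by simp [fA, ha]
      rw [hfAx]; nlinarith
    · have hT : Tmap x = 2 * x := by simp [Tmap, h0, ha]
      have hα2 : alphaFn (2 * x) = 0 := by rw [alpha_two_mul x h0, ha]; ring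
      have hfaT : fA (Tmap x) = 0 := by rw [hT]; simp [fA, hα2]
      have hfAx : fA x = 4 * x := by rw [fA, ha]; ring
      constructor
      · rw [hT]; linarith
      · rw [hfaT, hfAx, hT]; nlinarith

lemma S_bound (y : ℝ) (hy : y ≤ -1) :
    0 ≤ -Smap y - 1 ∧ (-Smap y - 1) + fB (Smap y) ≤ (5/8) * ((-y - 1) + fB y) := by
  set u : ℝ := -y - 1 with hu
  have hu0 : 0 ≤ u := by simp [hu]; linarith
  have hy1 : y + 1 = -u := by rw [hu]; ring
  rcases alpha_cases u with hb | hb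
  · -- α(u) = 0 : v = u/8
    have hS : Smap y = -u/8 - 1 := by rw [Smap, hy1, ← hu, hb]; ring
    have hv : -Smap y - 1 = u / 8 := by rw [hS]; ring
    have hfby : fB y = 0 := by rw [fB, hy1, ← hu, hb]; ring
    have hfbS : fB (Smap y) ≤ 4 * (u / 8) := by
      rw [fB]
      have : -(Smap y) - 1 = u/8 := hv
      have h1 : Smap y + 1 = -(u/8) := by linarith
      rw [h1]
      have h2 : -Smap y - 1 = u / 8 := hv
      rcases alpha_cases (-Smap y - 1) with h | h <;> rw [h] <;> nlinarith
    constructor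
    · rw [hv]; linarith
    · rw [hv, hfby]; nlinarith
  · -- α(u) = 1 : u > 0, v = 2u, α(v) = 0
    have hu' : 0 < u := by
      rcases eq_or_lt_of_le hu0 with h | h
      · exfalso; rw [← h] at hb; simp [alphaFn] at hb
      · exact h
    have hS : Smap y = -(2*u) - 1 := by rw [Smap, hy1, ← hu, hb]; ring
    have hv : -Smap y - 1 = 2 * u := by rw [hS]; ring
    have hα2 : alphaFn (2 * u) = 0 := by rw [alpha_two_mul u hu', hb]; ring
    have hfby : fB y = 4 * u := by rw [fB, hy1, ← hu, hb]; ring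
    have hfbS : fB (Smap y) = 0 := by
      rw [fB]
      have h1 : Smap y + 1 = -(2*u) := by linarith
      rw [h1, show -Smap y - 1 = 2*u from hv, hα2]; ring
    constructor
    · rw [hv]; linarith
    · rw [hv, hfbS, hfby]; nlinarith

theorem stmt_17 : ∀ x : ℝ, 0 ≤ x → ∀ y : ℝ, y ≤ -1 →
    |Tmap x - Smap y| + fA (Tmap x) + fB (Smap y) ≤
      (5 / 8) * (|x - y| + fA x + fB y) + (3 / 8) * 1 := by
  intro x hx y hy
  obtain ⟨hT0, hTle⟩ := T_bound x hx
  obtain ⟨hS0, hSle⟩ := S_bound y hy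
  have habs1 : |Tmap x - Smap y| = Tmap x + (-Smap y - 1) + 1 := by
    rw [abs_of_nonneg (by linarith)]; ring
  have habs2 : |x - y| = x + (-y - 1) + 1 := by
    rw [abs_of_nonneg (by linarith)]; ring
  rw [habs1, habs2]
  linarith
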